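/- Let H and H' be real normed vector spaces (H' complete), let (Ω, 𝒫) be a probability space, let N ≥ 1 and K ≥ 1 be integers, and for each task index i ∈ {1, …, N} and step index k ∈ {1, …, K} let M_{i,k} : H → H' be a continuous linear map with operator norm ‖M_{i,k}‖ ≤ G. Let w₁, …, w_K be nonnegative reals with Σₖ wₖ = 1. For each (i, k), let A_{i,k} and B_{i,k} be H-valued Bochner-integrable random vectors that are square-integrable about a common point μ_{i,k} ∈ H, with ∫ ‖A_{i,k} − μ_{i,k}‖² d𝒫 ≤ σ²/D_tr and ∫ ‖B_{i,k} − μ_{i,k}‖² d𝒫 ≤ σ²/D_val for reals σ ≥ 0, G ≥ 0 and positive integers D_tr, D_val. Then ∫ ‖ (1/N) Σᵢ₌₁ᴺ Σₖ₌₁ᴷ wₖ · M_{i,k}(A_{i,k} − B_{i,k}) ‖ d𝒫 ≤ √2 · G · σ · √(1/D_tr + 1/D_val). -/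

import Mathlib

/-!
Pointwise, the triangle inequality and `‖M i k‖ ≤ G` bound the norm of the averaged difference
by a convex combination of the terms `G (‖A i k - μ i k‖ + ‖B i k - μ i k‖)`. In expectation,
Jensen's inequality `E‖X‖ ≤ √(E‖X‖²)` bounds each term by `G (√(σ²/D_tr) + √(σ²/D_val))`,
and `√a + √b ≤ √2 √(a + b)` turns this into the stated constant.
-/

open MeasureTheory

open ProbabilityTheory in
theorem sq_integral_le_integral_sq {Ω : Type*} [MeasurableSpace Ω] {P : Measure Ω}
    [IsProbabilityMeasure P] {X : Ω → ℝ} (hX : MemLp X 2 P) :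
    (∫ ω, X ω ∂P) ^ 2 ≤ ∫ ω, X ω ^ 2 ∂P := by
  simpa [variance_eq_sub hX] using variance_nonneg X P

theorem integral_norm_le_sqrt_integral_norm_sq {Ω E : Type*} [MeasurableSpace Ω] {P : Measure Ω}
    [IsProbabilityMeasure P] [NormedAddCommGroup E] {f : Ω → E}
    (hf : AEStronglyMeasurable f P) (hsq : Integrable (fun ω => ‖f ω‖ ^ 2) P) :
    ∫ ω, ‖f ω‖ ∂P ≤ √(∫ ω, ‖f ω‖ ^ 2 ∂P) :=
  Real.le_sqrt_of_sq_le <|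
    sq_integral_le_integral_sq <| (memLp_two_iff_integrable_sq hf.norm).2 hsq

theorem integral_norm_sum_smul_le_of_forall_le {Ω E ι : Type*} [MeasurableSpace Ω] {P : Measure Ω}
    [NormedAddCommGroup E] [NormedSpace ℝ E] [Fintype ι] {c : ι → ℝ} {f : ι → Ω → E}
    (hc : ∀ j, 0 ≤ c j) (hcsum : ∑ j, c j = 1) (hf : ∀ j, Integrable (f j) P) {C : ℝ}
    (hC : ∀ j, ∫ ω, ‖f j ω‖ ∂P ≤ C) :
    ∫ ω, ‖∑ j, c j • f j ω‖ ∂P ≤ C := by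
  have hint : ∀ j ∈ Finset.univ, Integrable (fun ω => c j * ‖f j ω‖) P :=
    fun j _ => (hf j).norm.const_mul (c j)
  calc ∫ ω, ‖∑ j, c j • f j ω‖ ∂P
      ≤ ∫ ω, ∑ j, c j * ‖f j ω‖ ∂P := by
        refine integral_mono_of_nonneg (.of_forall fun ω => norm_nonneg _)
          (integrable_finsetSum _ hint) (.of_forall fun ω => ?_)
        refine (norm_sum_le _ _).trans_eq (Finset.sum_congr rfl fun j _ => ?_)
        rw [norm_smul, Real.norm_of_nonneg (hc j)]
    _ = ∑ j, c j * ∫ ω, ‖f j ω‖ ∂P := by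
        rw [integral_finsetSum _ hint]
        simp only [integral_const_mul]
    _ ≤ ∑ j, c j * C := Finset.sum_le_sum fun j _ => mul_le_mul_of_nonneg_left (hC j) (hc j)
    _ = C := by rw [← Finset.sum_mul, hcsum, one_mul]

theorem integral_norm_map_sub_le {Ω E F : Type*} [MeasurableSpace Ω] {P : Measure Ω}
    [IsFiniteMeasure P] [NormedAddCommGroup E] [NormedSpace ℝ E] [NormedAddCommGroup F] [NormedSpace ℝ F]
    {L : E →L[ℝ] F} {G : ℝ} (hL : ‖L‖ ≤ G) {X Y : Ω → E} (hX : Integrable X P)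
    (hY : Integrable Y P) (m : E) :
    ∫ ω, ‖L (X ω - Y ω)‖ ∂P ≤ G * (∫ ω, ‖X ω - m‖ ∂P + ∫ ω, ‖Y ω - m‖ ∂P) := by
  have hXm : Integrable (fun ω => ‖X ω - m‖) P := (hX.sub (integrable_const m)).norm
  have hYm : Integrable (fun ω => ‖Y ω - m‖) P := (hY.sub (integrable_const m)).norm
  rw [← integral_add hXm hYm, ← integral_const_mul]
  refine integral_mono_of_nonneg (.of_forall fun ω => norm_nonneg _)
    ((hXm.add hYm).const_mul G) (.of_forall fun ω => ?_)
  calc ‖L (X ω - Y ω)‖ ≤ G * ‖(X ω - m) - (Y ω - m)‖ := by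
        rw [sub_sub_sub_cancel_right]; exact L.le_of_opNorm_le hL _
    _ ≤ G * (‖X ω - m‖ + ‖Y ω - m‖) :=
        mul_le_mul_of_nonneg_left (norm_sub_le _ _) ((norm_nonneg L).trans hL)

theorem Real.sqrt_add_sqrt_le_sqrt_two_mul_sqrt_add {a b : ℝ} (ha : 0 ≤ a) (hb : 0 ≤ b) :
    √a + √b ≤ √2 * √(a + b) := by
  rw [← Real.sqrt_mul zero_le_two]
  refine Real.le_sqrt_of_sq_le ?_
  simpa [Real.sq_sqrt ha, Real.sq_sqrt hb] using add_sq_le (a := √a) (b := √b)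

theorem integral_norm_map_sub_le_of_integral_norm_sq_le {Ω E F : Type*} [MeasurableSpace Ω]
    {P : Measure Ω} [IsProbabilityMeasure P] [NormedAddCommGroup E] [NormedSpace ℝ E]
    [NormedAddCommGroup F] [NormedSpace ℝ F] {L : E →L[ℝ] F} {G : ℝ} (hL : ‖L‖ ≤ G)
    {X Y : Ω → E} (hX : Integrable X P) (hY : Integrable Y P) (m : E)
    (hXsq : Integrable (fun ω => ‖X ω - m‖ ^ 2) P) (hYsq : Integrable (fun ω => ‖Y ω - m‖ ^ 2) P)
    {s t : ℝ} (hs : ∫ ω, ‖X ω - m‖ ^ 2 ∂P ≤ s) (ht : ∫ ω, ‖Y ω - m‖ ^ 2 ∂P ≤ t) :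
    ∫ ω, ‖L (X ω - Y ω)‖ ∂P ≤ √2 * G * √(s + t) := by
  have hG : 0 ≤ G := (norm_nonneg L).trans hL
  have hs₀ : 0 ≤ s := (integral_nonneg fun ω => by positivity).trans hs
  have ht₀ : 0 ≤ t := (integral_nonneg fun ω => by positivity).trans ht
  have hXm : ∫ ω, ‖X ω - m‖ ∂P ≤ √s :=
    (integral_norm_le_sqrt_integral_norm_sq (hX.sub (integrable_const m)).1 hXsq).trans
      (Real.sqrt_le_sqrt hs)
  have hYm : ∫ ω, ‖Y ω - m‖ ∂P ≤ √t :=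
    (integral_norm_le_sqrt_integral_norm_sq (hY.sub (integrable_const m)).1 hYsq).trans
      (Real.sqrt_le_sqrt ht)
  calc ∫ ω, ‖L (X ω - Y ω)‖ ∂P
      ≤ G * (∫ ω, ‖X ω - m‖ ∂P + ∫ ω, ‖Y ω - m‖ ∂P) := integral_norm_map_sub_le hL hX hY m
    _ ≤ G * (√2 * √(s + t)) := by
        gcongr
        exact (add_le_add hXm hYm).trans (Real.sqrt_add_sqrt_le_sqrt_two_mul_sqrt_add hs₀ ht₀)
    _ = √2 * G * √(s + t) := by ring

theorem lft_meta_gradient_difference_bound_general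
    {H : Type*} [NormedAddCommGroup H] [NormedSpace ℝ H]
    {H' : Type*} [NormedAddCommGroup H'] [NormedSpace ℝ H']
    {Ω : Type*} [MeasurableSpace Ω] (P : Measure Ω) [IsProbabilityMeasure P]
    (N K : ℕ) (hN : 1 ≤ N)
    (M : Fin N → Fin K → H →L[ℝ] H') (G : ℝ)
    (hM : ∀ i k, ‖M i k‖ ≤ G)
    (w : Fin K → ℝ) (hw : ∀ k, 0 ≤ w k) (hwsum : ∑ k, w k = 1)
    (A B : Fin N → Fin K → Ω → H) (μ : Fin N → Fin K → H)
    (σ : ℝ) (hσ : 0 ≤ σ) (Dtr Dval : ℕ)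
    (hAint : ∀ i k, Integrable (A i k) P)
    (hBint : ∀ i k, Integrable (B i k) P)
    (hAsq : ∀ i k, Integrable (fun ω => ‖A i k ω - μ i k‖ ^ 2) P)
    (hBsq : ∀ i k, Integrable (fun ω => ‖B i k ω - μ i k‖ ^ 2) P)
    (hAbound : ∀ i k, ∫ ω, ‖A i k ω - μ i k‖ ^ 2 ∂P ≤ σ ^ 2 / Dtr)
    (hBbound : ∀ i k, ∫ ω, ‖B i k ω - μ i k‖ ^ 2 ∂P ≤ σ ^ 2 / Dval) :
    ∫ ω, ‖(N : ℝ)⁻¹ • ∑ i, ∑ k, w k • M i k (A i k ω - B i k ω)‖ ∂P ≤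
      Real.sqrt 2 * G * σ * Real.sqrt (1 / Dtr + 1 / Dval) := by
  have hσ_sqrt : √(σ ^ 2 / Dtr + σ ^ 2 / Dval) = σ * √(1 / Dtr + 1 / Dval) := by
    rw [show σ ^ 2 / (Dtr : ℝ) + σ ^ 2 / Dval = σ ^ 2 * (1 / Dtr + 1 / Dval) by ring,
      Real.sqrt_mul (sq_nonneg σ), Real.sqrt_sq hσ]
  have hweights : ∑ j : Fin N × Fin K, (N : ℝ)⁻¹ * w j.2 = 1 := by
    simp [Fintype.sum_prod_type, ← Finset.mul_sum, hwsum, Nat.one_le_iff_ne_zero.mp hN]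
  calc ∫ ω, ‖(N : ℝ)⁻¹ • ∑ i, ∑ k, w k • M i k (A i k ω - B i k ω)‖ ∂P
      = ∫ ω, ‖∑ j : Fin N × Fin K,
          ((N : ℝ)⁻¹ * w j.2) • M j.1 j.2 (A j.1 j.2 ω - B j.1 j.2 ω)‖ ∂P := by
        simp_rw [Fintype.sum_prod_type, Finset.smul_sum, smul_smul]
    _ ≤ √2 * G * σ * √(1 / Dtr + 1 / Dval) := by
        refine integral_norm_sum_smul_le_of_forall_le (fun j => ?_) hweights (fun j => ?_)
          (fun ⟨i, k⟩ => ?_)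
        · exact mul_nonneg (by positivity) (hw j.2)
        · exact (M j.1 j.2).integrable_comp ((hAint j.1 j.2).sub (hBint j.1 j.2))
        · rw [mul_assoc _ σ, ← hσ_sqrt]
          exact integral_norm_map_sub_le_of_integral_norm_sq_le (hM i k) (hAint i k) (hBint i k)
            (μ i k) (hAsq i k) (hBsq i k) (hAbound i k) (hBbound i k)

/-- Proposition 1 of the paper in explicit form: the expected norm of the weighted,
task-averaged difference of the two minibatch gradient estimates, pushed through the
per-task, per-step Jacobians `M i k` with `‖M i k‖ ≤ G`, is at most
`√2 · G · σ · √(1/D_tr + 1/D_val)`. -/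
theorem lft_meta_gradient_difference_bound
    {H : Type*} [NormedAddCommGroup H] [NormedSpace ℝ H]
    {H' : Type*} [NormedAddCommGroup H'] [NormedSpace ℝ H'] [CompleteSpace H']
    {Ω : Type*} [MeasurableSpace Ω] (P : Measure Ω) [IsProbabilityMeasure P]
    (N K : ℕ) (hN : 1 ≤ N) (hK : 1 ≤ K)
    (M : Fin N → Fin K → H →L[ℝ] H') (G : ℝ) (hG : 0 ≤ G)
    (hM : ∀ i k, ‖M i k‖ ≤ G)
    (w : Fin K → ℝ) (hw : ∀ k, 0 ≤ w k) (hwsum : ∑ k, w k = 1)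
    (A B : Fin N → Fin K → Ω → H) (μ : Fin N → Fin K → H)
    (σ : ℝ) (hσ : 0 ≤ σ) (Dtr Dval : ℕ) (hDtr : 0 < Dtr) (hDval : 0 < Dval)
    (hAint : ∀ i k, Integrable (A i k) P)
    (hBint : ∀ i k, Integrable (B i k) P)
    (hAsq : ∀ i k, Integrable (fun ω => ‖A i k ω - μ i k‖ ^ 2) P)
    (hBsq : ∀ i k, Integrable (fun ω => ‖B i k ω - μ i k‖ ^ 2) P)
    (hAbound : ∀ i k, ∫ ω, ‖A i k ω - μ i k‖ ^ 2 ∂P ≤ σ ^ 2 / Dtr)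
    (hBbound : ∀ i k, ∫ ω, ‖B i k ω - μ i k‖ ^ 2 ∂P ≤ σ ^ 2 / Dval) :
    ∫ ω, ‖(N : ℝ)⁻¹ • ∑ i, ∑ k, w k • M i k (A i k ω - B i k ω)‖ ∂P ≤
      Real.sqrt 2 * G * σ * Real.sqrt (1 / Dtr + 1 / Dval) :=
  lft_meta_gradient_difference_bound_general P N K hN M G hM w hw hwsum A B μ σ hσ Dtr Dval hAint
    hBint hAsq hBsq hAbound hBbound
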